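/- arXiv:2302.08718 — 2 statements merged into one kernel-verified Lean document; each statement's English description precedes it below -/
import Mathlib

section
/- Let $V$ be a Hilbert space with inner product $a$, let $u \in V$ satisfy $a(u,v) = f(v)$ for all $v \in V$ with $f \in V^*$, and let $u_h$ in a subspace $V_h \subset V$ solve $a_h(u_h, v_h) = f(J v_h)$ for all $v_h \in V_h$, where $a_h$ is coercive on $V_h$ with constant $C_s^{-1}$ and $J : V_h \to V$ is linear. Suppose further that for each $v_h \in V_h$: $a(v_h - J v_h, p) = 0$ and $a(v_h - \Pi v_h, p)=0$ for all $p$ in a closed subspace $W \subset V$ (with $\Pi v_h \in W$), $\|v_h - J v_h\| \le C_J \|v_h - \Pi v_h\|$, and $a_h(v_h,w_h) = a(\Pi v_h, \Pi w_h) + s_h((1-\Pi)v_h, (1-\Pi)w_h)$ with $s_h$ a symmetric bilinear form satisfying $s_h(e,e) \le C_s \|e\|^2$ on the kernel of $\Pi$. Then there is a constant $C$ depending only on $C_s, C_J$ such that $\|u - u_h\| \le C\big(\inf_{v_h \in V_h}\|u - v_h\| + \inf_{p \in W}\|u - p\|\big)$. -/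
open RealInnerProductSpace

noncomputable section

private lemma le_of_sq_le_sq'' (a b : ℝ) (hb : 0 ≤ b) (h : a^2 ≤ b^2) : a ≤ b := by
  nlinarith

set_option maxHeartbeats 1000000 in
/-- Abstract best-approximation error estimate for the modified conforming VEM with
companion operator `J` and source `f ∈ V^*` (Theorem 2.3(b)):
`‖u - u_h‖ ≤ (1 + C_s(1 + C_s + C_J)) (inf_{v_h ∈ V_h} ‖u - v_h‖ + inf_{p ∈ W} ‖u - p‖)`,
stated equivalently with arbitrary `v_h ∈ V_h` and `p ∈ W`. -/
theorem stmt_10 {V : Type*} [NormedAddCommGroup V] [InnerProductSpace ℝ V]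
    (Vh W : Submodule ℝ V) (J : Vh → V) (Pi : V →ₗ[ℝ] V)
    (hPimem : ∀ v : V, Pi v ∈ W)
    (hPiorth : ∀ v : V, ∀ p ∈ W, ⟪v - Pi v, p⟫ = 0)
    (hJorth : ∀ vh : Vh, ∀ p ∈ W, ⟪(vh : V) - J vh, p⟫ = 0)
    (Cs CJ : ℝ) (hCs : 0 < Cs) (hCJ : 0 ≤ CJ)
    (hJbd : ∀ vh : Vh, ‖(vh : V) - J vh‖ ≤ CJ * ‖(vh : V) - Pi (vh : V)‖)
    (sh : V →ₗ[ℝ] V →ₗ[ℝ] ℝ) (hshsym : ∀ x y : V, sh x y = sh y x)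
    (hshnn : ∀ x : V, Pi x = 0 → 0 ≤ sh x x)
    (hshbd : ∀ x : V, Pi x = 0 → sh x x ≤ Cs * ‖x‖ ^ 2)
    (ah : Vh → Vh → ℝ)
    (hah : ∀ vh wh : Vh, ah vh wh =
      ⟪Pi (vh : V), Pi (wh : V)⟫ + sh ((vh : V) - Pi (vh : V)) ((wh : V) - Pi (wh : V)))
    (hcoer : ∀ vh : Vh, Cs⁻¹ * ‖(vh : V)‖ ^ 2 ≤ ah vh vh)
    (f : V →L[ℝ] ℝ) (u : V) (hu : ∀ v : V, ⟪u, v⟫ = f v)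
    (uh : Vh) (huh : ∀ vh : Vh, ah uh vh = f (J vh)) :
    ∀ vh : Vh, ∀ p ∈ W,
      ‖u - (uh : V)‖ ≤ (1 + Cs * (1 + Cs + CJ)) * (‖u - (vh : V)‖ + ‖u - p‖) := by
  intro vh p hp
  -- Π fixes W
  have hPifix : ∀ q ∈ W, Pi q = q := by
    intro q hq
    have h0 : ⟪q - Pi q, q - Pi q⟫ = 0 :=
      hPiorth q (q - Pi q) (Submodule.sub_mem W hq (hPimem q))
    have h1 : q - Pi q = 0 := inner_self_eq_zero.mp h0
    exact (sub_eq_zero.mp h1).symm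
  -- Pythagoras split
  have pyth : ∀ v : V, ∀ q ∈ W, ‖v - q‖^2 = ‖v - Pi v‖^2 + ‖Pi v - q‖^2 := by
    intro v q hq
    have h0 : ⟪v - Pi v, Pi v - q⟫ = 0 :=
      hPiorth v _ (Submodule.sub_mem W (hPimem v) hq)
    have hvq : v - q = (v - Pi v) + (Pi v - q) := by abel
    rw [hvq, norm_add_sq_real, h0]; ring
  have hbest : ∀ v : V, ∀ q ∈ W, ‖v - Pi v‖ ≤ ‖v - q‖ := by
    intro v q hq
    apply le_of_sq_le_sq'' _ _ (norm_nonneg _)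
    rw [pyth v q hq]; nlinarith [sq_nonneg ‖Pi v - q‖]
  have hPicontr : ∀ v : V, ‖Pi v‖ ≤ ‖v‖ := by
    intro v
    apply le_of_sq_le_sq'' _ _ (norm_nonneg _)
    have h := pyth v 0 (Submodule.zero_mem W)
    simp only [sub_zero] at h
    nlinarith [sq_nonneg ‖v - Pi v‖]
  have hsubcontr : ∀ v : V, ‖v - Pi v‖ ≤ ‖v‖ := by
    intro v
    have h := hbest v 0 (Submodule.zero_mem W)
    simpa using h
  have hker : ∀ v : V, Pi (v - Pi v) = 0 := by
    intro v
    rw [map_sub, hPifix (Pi v) (hPimem v), sub_self]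
  -- Cauchy-Schwarz for sh on ker Π
  have hshCS : ∀ x y : V, Pi x = 0 → Pi y = 0 → (sh x y)^2 ≤ (Cs * ‖x‖ * ‖y‖)^2 := by
    intro x y hx hy
    have hquad : ∀ t : ℝ, 0 ≤ (sh y y) * (t*t) + (2 * sh x y) * t + sh x x := by
      intro t
      have hz : Pi (x + t • y) = 0 := by rw [map_add, map_smul, hx, hy, smul_zero, add_zero]
      have h0 := hshnn (x + t • y) hz
      have hexp : sh (x + t • y) (x + t • y)
          = (sh y y) * (t*t) + (2 * sh x y) * t + sh x x := by
        simp only [map_add, map_smul, LinearMap.add_apply, LinearMap.smul_apply, smul_eq_mul]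
        rw [hshsym y x]; ring
      rw [hexp] at h0; exact h0
    have hd := discrim_le_zero hquad
    rw [discrim] at hd
    have hxx := hshbd x hx
    have hyy := hshbd y hy
    have hxx0 := hshnn x hx
    have hyy0 := hshnn y hy
    have hmul : sh x x * sh y y ≤ (Cs * ‖x‖^2) * (Cs * ‖y‖^2) :=
      mul_le_mul hxx hyy hyy0 (by positivity)
    nlinarith [norm_nonneg x, norm_nonneg y]
  -- error in Vh
  set eh : Vh := uh - vh with heh
  have hehV : (eh : V) = (uh : V) - (vh : V) := rfl
  set E : V := (uh : V) - (vh : V) with hE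
  have hEeh : (eh : V) = E := hehV
  have harg : E - Pi E = ((uh : V) - Pi (uh : V)) - ((vh : V) - Pi (vh : V)) := by
    rw [hE, map_sub]; abel
  have hargP : Pi E = Pi (uh : V) - Pi (vh : V) := by rw [hE, map_sub]
  have hsplit : ah eh eh = ah uh eh - ah vh eh := by
    rw [hah, hah, hah, hEeh, harg, hargP]
    simp only [map_sub, LinearMap.sub_apply, inner_sub_left]
    ring
  -- identities
  have hid1 : ⟪u, J eh⟫ = ⟪u, E⟫ - ⟪u - p, E - J eh⟫ := by
    have h0 : ⟪(eh : V) - J eh, p⟫ = 0 := hJorth eh p hp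
    rw [hEeh] at h0
    have h0' : ⟪p, E - J eh⟫ = 0 := by rw [real_inner_comm]; exact h0
    have ha : ⟪u - p, E - J eh⟫ = ⟪u, E - J eh⟫ := by
      rw [inner_sub_left, h0', sub_zero]
    have hb : ⟪u, E - J eh⟫ = ⟪u, E⟫ - ⟪u, J eh⟫ := inner_sub_right _ _ _
    rw [ha, hb]; ring
  have hid2 : ⟪Pi (vh : V), Pi E⟫ = ⟪Pi (vh : V), E⟫ := by
    have h0 : ⟪E - Pi E, Pi (vh : V)⟫ = 0 := hPiorth E _ (hPimem (vh : V))
    have h0' : ⟪Pi (vh : V), E - Pi E⟫ = 0 := by rw [real_inner_comm]; exact h0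
    have := inner_sub_right (𝕜 := ℝ) (Pi (vh : V)) E (Pi E)
    rw [h0'] at this; linarith
  have hid3 : ⟪u, E⟫ - ⟪Pi (vh : V), E⟫
      = ⟪u - Pi u, E - Pi E⟫ + ⟪Pi (u - (vh : V)), E⟫ := by
    have h0 : ⟪u - Pi u, Pi E⟫ = 0 := hPiorth u _ (hPimem E)
    have h1 : ⟪u - Pi u, E - Pi E⟫ = ⟪u - Pi u, E⟫ := by
      rw [inner_sub_right, h0, sub_zero]
    rw [h1, map_sub, inner_sub_left, inner_sub_left]
    ring
  -- the coercivity estimate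
  have hco := hcoer eh
  rw [hEeh] at hco
  rw [hsplit, huh eh, ← hu (J eh), hah vh eh, hEeh] at hco
  rw [hid1] at hco
  -- hco : Cs⁻¹ * ‖E‖^2 ≤ ⟪u, E⟫ - ⟪u-p, E - J eh⟫ - (⟪Pi vh, Pi E⟫ + sh (vh - Pi vh) (E - Pi E))
  have key : Cs⁻¹ * ‖E‖^2 ≤
      ⟪u - Pi u, E - Pi E⟫ + ⟪Pi (u - (vh : V)), E⟫ - ⟪u - p, E - J eh⟫
        - sh ((vh : V) - Pi (vh : V)) (E - Pi E) := by
    have := hid2; have := hid3; linarith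
  -- bounds
  have b1 : ⟪u - Pi u, E - Pi E⟫ ≤ ‖u - p‖ * ‖E‖ :=
    le_trans (real_inner_le_norm _ _)
      (mul_le_mul (hbest u p hp) (hsubcontr E) (norm_nonneg _) (norm_nonneg _))
  have b2 : ⟪Pi (u - (vh : V)), E⟫ ≤ ‖u - (vh : V)‖ * ‖E‖ :=
    le_trans (real_inner_le_norm _ _)
      (mul_le_mul_of_nonneg_right (hPicontr _) (norm_nonneg _))
  have b3 : -⟪u - p, E - J eh⟫ ≤ CJ * ‖u - p‖ * ‖E‖ := by
    have h0 : |⟪u - p, E - J eh⟫| ≤ ‖u - p‖ * ‖E - J eh‖ := abs_real_inner_le_norm _ _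
    have h1 : ‖E - J eh‖ ≤ CJ * ‖E - Pi E‖ := hJbd eh
    have h2 : ‖E - Pi E‖ ≤ ‖E‖ := hsubcontr E
    have h3 : ‖E - J eh‖ ≤ CJ * ‖E‖ := h1.trans (mul_le_mul_of_nonneg_left h2 hCJ)
    have := neg_abs_le ⟪u - p, E - J eh⟫
    nlinarith [norm_nonneg (u - p), norm_nonneg E]
  have hvhbd : ‖(vh : V) - Pi (vh : V)‖ ≤ ‖u - (vh : V)‖ + ‖u - p‖ := by
    have hrw : (vh : V) - Pi (vh : V)
        = (((vh : V) - u) - Pi ((vh : V) - u)) + (u - Pi u) := by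
      rw [map_sub]; abel
    calc ‖(vh : V) - Pi (vh : V)‖
        ≤ ‖((vh : V) - u) - Pi ((vh : V) - u)‖ + ‖u - Pi u‖ := by rw [hrw]; exact norm_add_le _ _
      _ ≤ ‖(vh : V) - u‖ + ‖u - p‖ := add_le_add (hsubcontr _) (hbest u p hp)
      _ = ‖u - (vh : V)‖ + ‖u - p‖ := by rw [norm_sub_rev]
  have b4 : -sh ((vh : V) - Pi (vh : V)) (E - Pi E)
      ≤ Cs * (‖u - (vh : V)‖ + ‖u - p‖) * ‖E‖ := by
    have hcs := hshCS ((vh : V) - Pi (vh : V)) (E - Pi E) (hker _) (hker _)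
    have h0 : -sh ((vh : V) - Pi (vh : V)) (E - Pi E)
        ≤ Cs * ‖(vh : V) - Pi (vh : V)‖ * ‖E - Pi E‖ := by
      apply le_of_sq_le_sq'' _ _ (by positivity)
      rw [neg_pow]; simpa using hcs
    refine h0.trans ?_
    have h2 : ‖E - Pi E‖ ≤ ‖E‖ := hsubcontr E
    have := norm_nonneg ((vh : V) - Pi (vh : V))
    nlinarith [norm_nonneg E, norm_nonneg (E - Pi E), hvhbd, hCs.le,
      mul_le_mul hvhbd h2 (norm_nonneg _) (by positivity : (0:ℝ) ≤ ‖u - (vh : V)‖ + ‖u - p‖)]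
  set d : ℝ := ‖u - (vh : V)‖ + ‖u - p‖ with hd
  have hd0 : 0 ≤ d := by positivity
  have hK : Cs⁻¹ * ‖E‖^2 ≤ (1 + Cs + CJ) * d * ‖E‖ := by
    have h1 : ‖u - (vh : V)‖ ≤ d := by
      have : 0 ≤ ‖u - p‖ := norm_nonneg _
      rw [hd]; linarith
    have h2 : ‖u - p‖ ≤ d := by
      have : 0 ≤ ‖u - (vh : V)‖ := norm_nonneg _
      rw [hd]; linarith
    have m1 : ‖u - (vh : V)‖ * ‖E‖ ≤ d * ‖E‖ := mul_le_mul_of_nonneg_right h1 (norm_nonneg E)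
    have m2 : ‖u - p‖ * ‖E‖ ≤ d * ‖E‖ := mul_le_mul_of_nonneg_right h2 (norm_nonneg E)
    have m3 : CJ * (‖u - p‖ * ‖E‖) ≤ CJ * (d * ‖E‖) := mul_le_mul_of_nonneg_left m2 hCJ
    have m0 : ‖u - (vh : V)‖ * ‖E‖ + ‖u - p‖ * ‖E‖ = d * ‖E‖ := by rw [hd]; ring
    nlinarith [key, b1, b2, b3, b4, m0, m3]
  have hEbd : ‖E‖ ≤ Cs * (1 + Cs + CJ) * d := by
    rcases eq_or_lt_of_le (norm_nonneg E) with h | h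
    · rw [← h]; positivity
    · have h' : ‖E‖ * ‖E‖ ≤ (Cs * (1 + Cs + CJ) * d) * ‖E‖ := by
        have := mul_le_mul_of_nonneg_left hK hCs.le
        rw [← mul_assoc, mul_inv_cancel₀ hCs.ne', one_mul] at this
        nlinarith
      exact le_of_mul_le_mul_right h' h
  have htri : ‖u - (uh : V)‖ ≤ ‖u - (vh : V)‖ + ‖E‖ := by
    have hrw : u - (uh : V) = (u - (vh : V)) - E := by rw [hE]; abel
    rw [hrw]; exact norm_sub_le _ _
  have h1 : ‖u - (vh : V)‖ ≤ d := by
    have : 0 ≤ ‖u - p‖ := norm_nonneg _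
    rw [hd]; linarith
  calc ‖u - (uh : V)‖ ≤ ‖u - (vh : V)‖ + ‖E‖ := htri
    _ ≤ d + Cs * (1 + Cs + CJ) * d := add_le_add h1 hEbd
    _ = (1 + Cs * (1 + Cs + CJ)) * d := by ring
end
end

section
/- Let $a$ be an inner product on a Hilbert space $V$ with induced norm $\|\cdot\|$, $V_h \subset V$ a subspace, $W \subset V$ a closed subspace with $a$-orthogonal projection $\Pi$, and $s_h$ a symmetric positive semidefinite bilinear form on $V_h$ with $s_h(e,e) \le C_s \|e\|^2$ for $e$ in the kernel of $\Pi|_{V_h}$. Then for any $u \in V$ and $v_h, e_h \in V_h$: $s_h((1-\Pi)v_h, (1-\Pi)e_h) \le C_s\big(\|u - v_h\| + \|u - \Pi u\|\big)\|e_h\|$. -/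
open RealInnerProductSpace

noncomputable section

private lemma cs_bilin {V : Type*} [AddCommGroup V] [Module ℝ V]
    (b : V →ₗ[ℝ] V →ₗ[ℝ] ℝ) (hsym : ∀ x y, b x y = b y x)
    (hnn : ∀ x, 0 ≤ b x x) (x y : V) :
    (b x y) ^ 2 ≤ b x x * b y y := by
  rcases eq_or_lt_of_le (hnn y) with h0 | hpos
  · have key : ∀ t : ℝ, 0 ≤ b x x + 2 * t * b x y := by
      intro t
      have h := hnn (x + t • y)
      have e : b (x + t • y) (x + t • y)
          = b x x + 2 * t * b x y + t ^ 2 * b y y := by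
        simp only [map_add, map_smul, LinearMap.add_apply, LinearMap.smul_apply,
          smul_eq_mul]
        rw [hsym y x]
        ring
      rw [e, ← h0] at h
      linarith
    have hbxy : b x y = 0 := by
      by_contra h
      have := key ((- b x x - 1) / (2 * b x y))
      have h2 : (2 : ℝ) * ((- b x x - 1) / (2 * b x y)) * b x y = - b x x - 1 := by
        field_simp
      nlinarith
    rw [hbxy, ← h0]
    simp
  · have h := hnn (x - (b x y / b y y) • y)
    have e : b (x - (b x y / b y y) • y) (x - (b x y / b y y) • y)
        = b x x - 2 * (b x y / b y y) * b x y + (b x y / b y y) ^ 2 * b y y := by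
      simp only [map_sub, map_smul, LinearMap.sub_apply, LinearMap.smul_apply,
        smul_eq_mul]
      rw [hsym y x]
      ring
    rw [e] at h
    have hne : b y y ≠ 0 := ne_of_gt hpos
    have h2 : 2 * (b x y / b y y) * b x y = 2 * ((b x y)^2 / b y y) := by
      field_simp
    have h3 : (b x y / b y y) ^ 2 * b y y = (b x y)^2 / b y y := by
      field_simp
    rw [h2, h3] at h
    have h4 : (b x y)^2 / b y y ≤ b x x := by linarith
    have := (div_le_iff₀ hpos).mp h4
    linarith

/-- Stabilization-term estimate (2.24): for the symmetric positive semidefinite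
stabilization `s_h` bounded by `C_s` on the kernel of `Π`,
`s_h((1-Π)v_h, (1-Π)e_h) ≤ C_s (‖u - v_h‖ + ‖u - Π u‖) ‖e_h‖`. -/
theorem stmt_19 {V : Type*} [NormedAddCommGroup V] [InnerProductSpace ℝ V]
    (W Vh : Submodule ℝ V) (Pi : V →ₗ[ℝ] V)
    (hPimem : ∀ v : V, Pi v ∈ W)
    (hPiorth : ∀ v : V, ∀ p ∈ W, ⟪v - Pi v, p⟫ = 0)
    (sh : V →ₗ[ℝ] V →ₗ[ℝ] ℝ) (hshsym : ∀ x y : V, sh x y = sh y x)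
    (hshnn : ∀ x : V, 0 ≤ sh x x)
    (Cs : ℝ) (hCs : 0 ≤ Cs)
    (hshbd : ∀ e : V, Pi e = 0 → sh e e ≤ Cs * ‖e‖ ^ 2) :
    ∀ (u : V) (vh eh : Vh),
      sh ((vh : V) - Pi (vh : V)) ((eh : V) - Pi (eh : V))
        ≤ Cs * (‖u - (vh : V)‖ + ‖u - Pi u‖) * ‖(eh : V)‖ := by
  intro u vh eh
  -- Pi is the identity on W
  have hPiW : ∀ w ∈ W, Pi w = w := by
    intro w hw
    have hmem : w - Pi w ∈ W := W.sub_mem hw (hPimem w)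
    have h := hPiorth w (w - Pi w) hmem
    rw [inner_self_eq_zero] at h
    exact (sub_eq_zero.mp h).symm
  -- Pi annihilates v - Pi v
  have hker : ∀ v : V, Pi (v - Pi v) = 0 := by
    intro v
    rw [map_sub, hPiW (Pi v) (hPimem v), sub_self]
  -- best approximation: ‖v - Pi v‖ ≤ ‖v - w‖ for w ∈ W
  have hbest : ∀ v : V, ∀ w ∈ W, ‖v - Pi v‖ ≤ ‖v - w‖ := by
    intro v w hw
    have hdecomp : v - w = (v - Pi v) + (Pi v - w) := by abel
    have horth : ⟪v - Pi v, Pi v - w⟫ = 0 :=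
      hPiorth v _ (W.sub_mem (hPimem v) hw)
    have hsq : ‖v - w‖ ^ 2 = ‖v - Pi v‖ ^ 2 + ‖Pi v - w‖ ^ 2 := by
      rw [hdecomp, norm_add_sq_real, horth]
      ring
    nlinarith [norm_nonneg (v - w), norm_nonneg (v - Pi v), norm_nonneg (Pi v - w)]
  set x := (vh : V) - Pi (vh : V) with hx
  set y := (eh : V) - Pi (eh : V) with hy
  have hbx : sh x x ≤ Cs * ‖x‖ ^ 2 := hshbd x (hker _)
  have hby : sh y y ≤ Cs * ‖y‖ ^ 2 := hshbd y (hker _)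
  have hcs : (sh x y) ^ 2 ≤ sh x x * sh y y := cs_bilin sh hshsym hshnn x y
  have hmain : sh x y ≤ Cs * ‖x‖ * ‖y‖ := by
    have hB : 0 ≤ Cs * ‖x‖ * ‖y‖ := by positivity
    have hsq : (sh x y) ^ 2 ≤ (Cs * ‖x‖ * ‖y‖) ^ 2 := by
      nlinarith [hshnn x, hshnn y, norm_nonneg x, norm_nonneg y, sq_nonneg ‖x‖,
        sq_nonneg ‖y‖]
    nlinarith [sq_nonneg (sh x y - Cs * ‖x‖ * ‖y‖), sq_nonneg (sh x y + Cs * ‖x‖ * ‖y‖)]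
  -- ‖x‖ ≤ ‖u - vh‖ + ‖u - Pi u‖
  have hxbd : ‖x‖ ≤ ‖u - (vh : V)‖ + ‖u - Pi u‖ := by
    have h1 : ‖x‖ ≤ ‖(vh : V) - Pi u‖ := hbest (vh : V) (Pi u) (hPimem u)
    have h2 : ‖(vh : V) - Pi u‖ ≤ ‖(vh : V) - u‖ + ‖u - Pi u‖ := by
      have : (vh : V) - Pi u = ((vh : V) - u) + (u - Pi u) := by abel
      rw [this]; exact norm_add_le _ _
    have h3 : ‖(vh : V) - u‖ = ‖u - (vh : V)‖ := norm_sub_rev _ _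
    linarith
  -- ‖y‖ ≤ ‖eh‖
  have hybd : ‖y‖ ≤ ‖(eh : V)‖ := by
    have := hbest (eh : V) 0 W.zero_mem
    simpa using this
  calc sh x y ≤ Cs * ‖x‖ * ‖y‖ := hmain
    _ ≤ Cs * (‖u - (vh : V)‖ + ‖u - Pi u‖) * ‖(eh : V)‖ := by
        apply mul_le_mul
        · exact mul_le_mul_of_nonneg_left hxbd hCs
        · exact hybd
        · exact norm_nonneg y
        · positivity
end
end
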